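/- Let 0 < β < 1, t > 0, and n a positive integer. Let T_n(t) = {(s₁, …, s_n) ∈ ℝ^n : 0 < s₁ < s₂ < ⋯ < s_n < t}, and set s_{n+1} = t. Then ∫_{T_n(t)} ∏_{k=1}^{n} (s_{k+1} − s_k)^{−β} ds₁⋯ds_n = t^{n(1−β)} Γ(1−β)^n / Γ(1 + n(1−β)). -/

import Mathlib

open MeasureTheory Set Real
open scoped ENNReal

namespace SimplexIntegralAux

lemma measurable_rpow_const' (p : ℝ) : Measurable fun x : ℝ => x ^ p :=
  measurable_of_continuousOn_compl_singleton 0 <|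
    continuousOn_of_forall_continuousAt fun x hx =>
      Real.continuousAt_rpow_const x p (Or.inl hx)


lemma meas_beta (p q T : ℝ) : Measurable (fun x : ℝ => x ^ p * (T - x) ^ q) :=
  ((measurable_rpow_const' p).comp measurable_id).mul
    ((measurable_rpow_const' q).comp (measurable_const.sub measurable_id))

lemma integrableOn_beta {p q T : ℝ} (hp : -1 < p) (hq : -1 < q) (hT : 0 < T) :
    IntegrableOn (fun x : ℝ => x ^ p * (T - x) ^ q) (Ioo 0 T) := by
  have h2 : 0 < T / 2 := by linarith
  have hsub : Ioo (0:ℝ) T ⊆ Ioc 0 (T/2) ∪ Ioo (T/2) T := by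
    intro x hx
    rcases le_or_gt x (T/2) with h | h
    · exact Or.inl ⟨hx.1, h⟩
    · exact Or.inr ⟨h, hx.2⟩
  refine IntegrableOn.mono_set (IntegrableOn.union ?_ ?_) hsub
  · have hbase : IntegrableOn (fun x : ℝ => x ^ p) (Ioc 0 (T/2)) := by
      have := intervalIntegral.intervalIntegrable_rpow' (a := 0) (b := T/2) hp
      rwa [intervalIntegrable_iff_integrableOn_Ioc_of_le h2.le] at this
    refine (hbase.mul_const (max ((T/2)^q) (T^q))).mono'
      (meas_beta p q T).aestronglyMeasurable ?_
    filter_upwards [ae_restrict_mem measurableSet_Ioc] with x hx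
    have hx0 : 0 < x := hx.1
    have hTx : T / 2 ≤ T - x := by linarith [hx.2]
    have hTx0 : (0:ℝ) ≤ T - x := by linarith
    have hb : (T - x) ^ q ≤ max ((T/2)^q) (T^q) := by
      rcases le_or_gt 0 q with hq0 | hq0
      · exact le_max_of_le_right (rpow_le_rpow hTx0 (by linarith) hq0)
      · exact le_max_of_le_left (rpow_le_rpow_of_nonpos h2 hTx hq0.le)
    rw [norm_mul, Real.norm_eq_abs, Real.norm_eq_abs, abs_of_nonneg (rpow_nonneg hx0.le p),
      abs_of_nonneg (rpow_nonneg hTx0 q)]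
    exact mul_le_mul_of_nonneg_left hb (rpow_nonneg hx0.le p)
  · have hbase : IntegrableOn (fun x : ℝ => (T - x) ^ q) (Ioo (T/2) T) := by
      have h1 : IntervalIntegrable (fun y : ℝ => y ^ q) volume 0 (T/2) :=
        intervalIntegral.intervalIntegrable_rpow' hq
      have h2' := (h1.comp_sub_left T).symm
      have h3 : IntervalIntegrable (fun x : ℝ => (T - x) ^ q) volume (T/2) T := by
        have e1 : T - T/2 = T/2 := by ring
        have e2 : T - 0 = T := by ring
        rwa [e1, e2] at h2'
      rw [intervalIntegrable_iff_integrableOn_Ioc_of_le (by linarith : T/2 ≤ T)] at h3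
      exact h3.mono_set Ioo_subset_Ioc_self
    refine (hbase.const_mul (max ((T/2)^p) (T^p))).mono'
      (meas_beta p q T).aestronglyMeasurable ?_
    filter_upwards [ae_restrict_mem measurableSet_Ioo] with x hx
    have hx0 : 0 < T - x := by linarith [hx.2]
    have hb : x ^ p ≤ max ((T/2)^p) (T^p) := by
      rcases le_or_gt 0 p with hp0 | hp0
      · exact le_max_of_le_right (rpow_le_rpow (by linarith [hx.1]) hx.2.le hp0)
      · exact le_max_of_le_left (rpow_le_rpow_of_nonpos h2 hx.1.le hp0.le)
    rw [norm_mul, Real.norm_eq_abs, Real.norm_eq_abs,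
      abs_of_nonneg (rpow_nonneg (by linarith [hx.1] : (0:ℝ) ≤ x) p),
      abs_of_nonneg (rpow_nonneg hx0.le q)]
    exact mul_le_mul_of_nonneg_right hb (rpow_nonneg hx0.le q)


lemma integral_beta {p q T : ℝ} (hp : -1 < p) (hq : -1 < q) (hT : 0 < T) :
    ∫ x in Ioo (0:ℝ) T, x ^ p * (T - x) ^ q
      = T ^ (p + q + 1) * (Real.Gamma (p + 1) * Real.Gamma (q + 1) / Real.Gamma (p + q + 2)) := by
  have hs : 0 < ((p:ℂ) + 1).re := by
    simp only [Complex.add_re, Complex.ofReal_re, Complex.one_re]; linarith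
  have ht' : 0 < ((q:ℂ) + 1).re := by
    simp only [Complex.add_re, Complex.ofReal_re, Complex.one_re]; linarith
  have hΓ : Complex.Gamma ((p:ℂ) + 1 + ((q:ℂ) + 1)) ≠ 0 :=
    Complex.Gamma_ne_zero_of_re_pos (by
      simp only [Complex.add_re, Complex.ofReal_re, Complex.one_re]; linarith)
  have hbeta : Complex.betaIntegral ((p:ℂ) + 1) ((q:ℂ) + 1)
      = Complex.Gamma ((p:ℂ) + 1) * Complex.Gamma ((q:ℂ) + 1) /
        Complex.Gamma ((p:ℂ) + 1 + ((q:ℂ) + 1)) := by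
    rw [eq_div_iff hΓ, mul_comm, ← Complex.Gamma_mul_Gamma_eq_betaIntegral hs ht']
  have hscaled := Complex.betaIntegral_scaled ((p:ℂ) + 1) ((q:ℂ) + 1) hT
  -- rewrite the complex interval integral as ofReal of the real one
  have hcongr : (∫ x in (0:ℝ)..T, (x:ℂ) ^ ((p:ℂ) + 1 - 1) * ((T:ℂ) - x) ^ ((q:ℂ) + 1 - 1))
      = ((∫ x in (0:ℝ)..T, x ^ p * (T - x) ^ q : ℝ) : ℂ) := by
    rw [← intervalIntegral.integral_ofReal]
    refine intervalIntegral.integral_congr fun x hx => ?_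
    rw [uIcc_of_le hT.le] at hx
    have hx0 : (0:ℝ) ≤ x := hx.1
    have hTx : (0:ℝ) ≤ T - x := by linarith [hx.2]
    rw [show ((T:ℂ) - (x:ℂ)) = ((T - x : ℝ) : ℂ) by push_cast; ring,
      show ((p:ℂ) + 1 - 1) = ((p : ℝ) : ℂ) by push_cast; ring,
      show ((q:ℂ) + 1 - 1) = ((q : ℝ) : ℂ) by push_cast; ring,
      ← Complex.ofReal_cpow hx0, ← Complex.ofReal_cpow hTx]
    push_cast
    ring
  rw [hcongr, hbeta] at hscaled
  have hRHS : ((T:ℂ)) ^ ((p:ℂ) + 1 + ((q:ℂ) + 1) - 1) *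
      (Complex.Gamma ((p:ℂ) + 1) * Complex.Gamma ((q:ℂ) + 1) /
        Complex.Gamma ((p:ℂ) + 1 + ((q:ℂ) + 1)))
      = ((T ^ (p + q + 1) * (Real.Gamma (p + 1) * Real.Gamma (q + 1) /
          Real.Gamma (p + q + 2)) : ℝ) : ℂ) := by
    have e1 : ((p:ℂ) + 1 + ((q:ℂ) + 1) - 1) = ((p + q + 1 : ℝ) : ℂ) := by push_cast; ring
    have e2 : ((p:ℂ) + 1) = ((p + 1 : ℝ) : ℂ) := by push_cast; ring
    have e3 : ((q:ℂ) + 1) = ((q + 1 : ℝ) : ℂ) := by push_cast; ring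
    have e4 : ((p:ℂ) + 1 + ((q:ℂ) + 1)) = ((p + q + 2 : ℝ) : ℂ) := by push_cast; ring
    rw [e1, e4, e2, e3, Complex.Gamma_ofReal, Complex.Gamma_ofReal, Complex.Gamma_ofReal,
      ← Complex.ofReal_cpow hT.le]
    push_cast
    ring
  rw [hRHS] at hscaled
  have := Complex.ofReal_injective hscaled
  rw [← this, intervalIntegral.integral_of_le hT.le, integral_Ioc_eq_integral_Ioo]

/-- The ordered simplex. -/
def S (n : ℕ) (t : ℝ) : Set (Fin n → ℝ) := {s | StrictMono s ∧ ∀ i, 0 < s i ∧ s i < t}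

/-- The integrand. -/
noncomputable def P (β : ℝ) (n : ℕ) (t : ℝ) (s : Fin n → ℝ) : ℝ :=
  ∏ k : Fin n,
    ((Fin.snoc s t : Fin (n + 1) → ℝ) k.succ -
      (Fin.snoc s t : Fin (n + 1) → ℝ) k.castSucc) ^ (-β)

lemma measurable_snoc_apply {n : ℕ} (t : ℝ) (j : Fin (n + 1)) :
    Measurable fun s : Fin n → ℝ => (Fin.snoc s t : Fin (n + 1) → ℝ) j := by
  rcases Fin.eq_castSucc_or_eq_last j with ⟨i, rfl⟩ | rfl
  · simp only [Fin.snoc_castSucc]; exact measurable_pi_apply i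
  · simp only [Fin.snoc_last]; exact measurable_const

lemma measurable_P (β : ℝ) (n : ℕ) (t : ℝ) : Measurable (P β n t) := by
  apply Finset.measurable_prod
  intro k _
  exact (measurable_rpow_const' (-β)).comp
    ((measurable_snoc_apply t k.succ).sub (measurable_snoc_apply t k.castSucc))

lemma measurableSet_S (n : ℕ) (t : ℝ) : MeasurableSet (S n t) := by
  have h1 : MeasurableSet {s : Fin n → ℝ | StrictMono s} := by
    have he : {s : Fin n → ℝ | StrictMono s}
        = ⋂ (i : Fin n) (j : Fin n) (_ : i < j), {s : Fin n → ℝ | s i < s j} := by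
      ext s
      simp only [mem_setOf_eq, mem_iInter, StrictMono]
    rw [he]
    exact MeasurableSet.iInter fun i => MeasurableSet.iInter fun j =>
      MeasurableSet.iInter fun _ =>
        measurableSet_lt (measurable_pi_apply i) (measurable_pi_apply j)
  have h2 : MeasurableSet {s : Fin n → ℝ | ∀ i, 0 < s i ∧ s i < t} := by
    have he : {s : Fin n → ℝ | ∀ i, 0 < s i ∧ s i < t}
        = ⋂ i : Fin n, ({s : Fin n → ℝ | 0 < s i} ∩ {s : Fin n → ℝ | s i < t}) := by
      ext s; simp [mem_setOf_eq, forall_and]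
    rw [he]
    exact MeasurableSet.iInter fun i =>
      (measurableSet_lt measurable_const (measurable_pi_apply i)).inter
        (measurableSet_lt (measurable_pi_apply i) measurable_const)
  exact h1.inter h2

lemma snoc_strictMono_iff {n : ℕ} {y : Fin n → ℝ} {u : ℝ} :
    StrictMono (Fin.snoc y u : Fin (n + 1) → ℝ) ↔ StrictMono y ∧ ∀ i, y i < u := by
  constructor
  · intro h
    refine ⟨fun a b hab => ?_, fun i => ?_⟩
    · have := h (Fin.castSucc_lt_castSucc_iff.2 hab)
      simpa using this
    · have := h (Fin.castSucc_lt_last i)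
      simpa using this
  · rintro ⟨h1, h2⟩ a b hab
    rcases Fin.eq_castSucc_or_eq_last b with ⟨b', rfl⟩ | rfl
    · rcases Fin.eq_castSucc_or_eq_last a with ⟨a', rfl⟩ | rfl
      · simpa using h1 (Fin.castSucc_lt_castSucc_iff.1 hab)
      · exact absurd hab (not_lt.2 (Fin.le_last _))
    · rcases Fin.eq_castSucc_or_eq_last a with ⟨a', rfl⟩ | rfl
      · simpa using h2 a'
      · exact absurd hab (lt_irrefl _)

lemma snoc_mem_S_iff {n : ℕ} {t u : ℝ} {y : Fin n → ℝ} :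
    (Fin.snoc y u : Fin (n + 1) → ℝ) ∈ S (n + 1) t ↔ u ∈ Ioo 0 t ∧ y ∈ S n u := by
  constructor
  · rintro ⟨h1, h2⟩
    have hmono := snoc_strictMono_iff.1 h1
    have hlast := h2 (Fin.last n)
    rw [Fin.snoc_last] at hlast
    refine ⟨⟨hlast.1, hlast.2⟩, hmono.1, fun i => ?_⟩
    have := h2 i.castSucc
    rw [Fin.snoc_castSucc] at this
    exact ⟨this.1, hmono.2 i⟩
  · rintro ⟨hu, hy1, hy2⟩
    refine ⟨snoc_strictMono_iff.2 ⟨hy1, fun i => (hy2 i).2⟩, fun i => ?_⟩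
    rcases Fin.eq_castSucc_or_eq_last i with ⟨i', rfl⟩ | rfl
    · rw [Fin.snoc_castSucc]
      exact ⟨(hy2 i').1, lt_trans (hy2 i').2 hu.2⟩
    · rw [Fin.snoc_last]
      exact ⟨hu.1, hu.2⟩

lemma P_snoc (β : ℝ) {n : ℕ} (t u : ℝ) (y : Fin n → ℝ) :
    P β (n + 1) t (Fin.snoc y u) = (t - u) ^ (-β) * P β n u y := by
  rw [P, Fin.prod_univ_castSucc]
  simp only [Fin.succ_castSucc, Fin.snoc_castSucc, Fin.snoc_last, Fin.succ_last]
  rw [mul_comm, P]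
  simp only [Fin.snoc_castSucc]

lemma snoc_strictMono_of_mem {n : ℕ} {t : ℝ} {s : Fin n → ℝ} (hs : s ∈ S n t) :
    StrictMono (Fin.snoc s t : Fin (n + 1) → ℝ) :=
  snoc_strictMono_iff.2 ⟨hs.1, fun i => (hs.2 i).2⟩

lemma P_pos {β : ℝ} {n : ℕ} {t : ℝ} {s : Fin n → ℝ} (hs : s ∈ S n t) : 0 < P β n t s := by
  apply Finset.prod_pos
  intro k _
  apply Real.rpow_pos_of_pos
  have := snoc_strictMono_of_mem hs (Fin.castSucc_lt_succ : k.castSucc < k.succ)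
  linarith


noncomputable def C (β : ℝ) (n : ℕ) : ℝ :=
  Real.Gamma (1 - β) ^ n / Real.Gamma (1 + (n : ℝ) * (1 - β))

lemma C_pos {β : ℝ} (hβ1 : β < 1) (n : ℕ) : 0 < C β n := by
  apply div_pos
  · exact pow_pos (Real.Gamma_pos_of_pos (by linarith)) n
  · apply Real.Gamma_pos_of_pos
    have : (0:ℝ) ≤ (n : ℝ) * (1 - β) := mul_nonneg (Nat.cast_nonneg n) (by linarith)
    linarith

lemma L_eq {β : ℝ} (hβ0 : 0 < β) (hβ1 : β < 1) :
    ∀ n : ℕ, ∀ t : ℝ, 0 < t →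
      ∫⁻ s in S n t, ENNReal.ofReal (P β n t s)
        = ENNReal.ofReal (t ^ ((n : ℝ) * (1 - β)) * C β n) := by
  intro n
  induction n with
  | zero =>
    intro t ht
    have hS : S 0 t = univ := eq_univ_of_forall fun s => ⟨fun a => a.elim0, fun i => i.elim0⟩
    have hP : P β 0 t = fun _ => 1 := by
      funext s; rw [P]; simp
    rw [hS, hP, Measure.restrict_univ]
    simp only [ENNReal.ofReal_one, lintegral_one]
    rw [show ((0:ℕ):ℝ) * (1 - β) = 0 by norm_num, Real.rpow_zero, C]
    simp [Real.Gamma_one, MeasureTheory.volume_pi, Measure.pi_univ]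
  | succ n ih =>
    intro t ht
    set a : ℝ := (n : ℝ) * (1 - β) with ha_def
    have ha : (0:ℝ) ≤ a := mul_nonneg (Nat.cast_nonneg n) (by linarith)
    set e := MeasurableEquiv.piFinSuccAbove (fun _ : Fin (n + 1) => ℝ) (Fin.last n) with he
    set f : (Fin (n + 1) → ℝ) → ℝ≥0∞ :=
      (S (n + 1) t).indicator fun s => ENNReal.ofReal (P β (n + 1) t s) with hf_def
    have hf : Measurable f :=
      ((measurable_P β (n + 1) t).ennreal_ofReal).indicator (measurableSet_S (n + 1) t)
    have step1 : ∫⁻ s in S (n + 1) t, ENNReal.ofReal (P β (n + 1) t s) = ∫⁻ s, f s :=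
      (lintegral_indicator (measurableSet_S (n + 1) t) _).symm
    have hmp : MeasurePreserving e.symm volume volume :=
      (volume_preserving_piFinSuccAbove (fun _ : Fin (n + 1) => ℝ) (Fin.last n)).symm
    have step2 : ∫⁻ s, f s = ∫⁻ p : ℝ × (Fin n → ℝ), f (e.symm p) :=
      (hmp.lintegral_comp hf).symm
    have hsymm : ∀ p : ℝ × (Fin n → ℝ), e.symm p = Fin.snoc p.2 p.1 := by
      intro p
      simp [he, MeasurableEquiv.piFinSuccAbove_symm_apply, Fin.insertNthEquiv, Fin.insertNth_last']
    have key : ∀ u : ℝ, (∫⁻ y, f (Fin.snoc y u))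
        = (Ioo (0:ℝ) t).indicator
            (fun u => ENNReal.ofReal ((t - u) ^ (-β)) * ENNReal.ofReal (u ^ a * C β n)) u := by
      intro u
      by_cases hu : u ∈ Ioo (0:ℝ) t
      · rw [indicator_of_mem hu]
        have hpt : ∀ y : Fin n → ℝ, f (Fin.snoc y u)
            = (S n u).indicator
                (fun y => ENNReal.ofReal ((t - u) ^ (-β)) * ENNReal.ofReal (P β n u y)) y := by
          intro y
          by_cases hy : y ∈ S n u
          · rw [hf_def, indicator_of_mem hy, indicator_of_mem (snoc_mem_S_iff.2 ⟨hu, hy⟩),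
              P_snoc, ENNReal.ofReal_mul (Real.rpow_nonneg (by linarith [hu.2]) (-β))]
          · rw [hf_def, indicator_of_notMem hy,
              indicator_of_notMem (fun h => hy (snoc_mem_S_iff.1 h).2)]
        simp_rw [hpt]
        rw [lintegral_indicator (measurableSet_S n u),
          lintegral_const_mul _ ((measurable_P β n u).ennreal_ofReal), ih u hu.1]
      · rw [indicator_of_notMem hu]
        have hpt : ∀ y : Fin n → ℝ, f (Fin.snoc y u) = 0 := fun y =>
          indicator_of_notMem (fun h => hu (snoc_mem_S_iff.1 h).1) _
        simp_rw [hpt]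
        exact lintegral_zero
    have step3 : ∫⁻ p : ℝ × (Fin n → ℝ), f (e.symm p)
        = ∫⁻ u, ∫⁻ y, f (Fin.snoc y u) := by
      rw [Measure.volume_eq_prod, lintegral_prod (fun p => f (e.symm p)) (hf.comp e.symm.measurable).aemeasurable]
      simp_rw [hsymm]
    rw [step1, step2, step3]
    simp_rw [key]
    rw [lintegral_indicator measurableSet_Ioo]
    have hC := C_pos hβ1 n
    have hInt : IntegrableOn (fun u : ℝ => (t - u) ^ (-β) * (u ^ a * C β n)) (Ioo 0 t) := by
      have h := (integrableOn_beta (p := a) (q := -β) (by linarith) (by linarith) ht).mul_const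
        (C β n)
      exact h.congr (ae_of_all _ fun x => by ring)
    have hNN : 0 ≤ᵐ[volume.restrict (Ioo (0:ℝ) t)]
        fun u : ℝ => (t - u) ^ (-β) * (u ^ a * C β n) := by
      filter_upwards [ae_restrict_mem measurableSet_Ioo] with u hu
      exact mul_nonneg (Real.rpow_nonneg (by linarith [hu.2]) _)
        (mul_nonneg (Real.rpow_nonneg hu.1.le _) hC.le)
    have heq1 : ∫⁻ u in Ioo (0:ℝ) t,
          ENNReal.ofReal ((t - u) ^ (-β)) * ENNReal.ofReal (u ^ a * C β n)
        = ∫⁻ u in Ioo (0:ℝ) t, ENNReal.ofReal ((t - u) ^ (-β) * (u ^ a * C β n)) := by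
      refine setLIntegral_congr_fun measurableSet_Ioo (fun u hu => ?_)
      rw [← ENNReal.ofReal_mul (Real.rpow_nonneg (by linarith [hu.2]) (-β))]
    rw [heq1, ← ofReal_integral_eq_lintegral_ofReal hInt hNN]
    congr 1
    have hval : (∫ u in Ioo (0:ℝ) t, (t - u) ^ (-β) * (u ^ a * C β n))
        = C β n * (t ^ (a + (-β) + 1) *
            (Real.Gamma (a + 1) * Real.Gamma (-β + 1) / Real.Gamma (a + (-β) + 2))) := by
      calc (∫ u in Ioo (0:ℝ) t, (t - u) ^ (-β) * (u ^ a * C β n))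
          = ∫ u in Ioo (0:ℝ) t, C β n * (u ^ a * (t - u) ^ (-β)) :=
            setIntegral_congr_fun measurableSet_Ioo (fun u _ => by ring)
        _ = C β n * ∫ u in Ioo (0:ℝ) t, u ^ a * (t - u) ^ (-β) := integral_const_mul _ _
        _ = _ := by rw [integral_beta (by linarith) (by linarith) ht]
    rw [hval]
    have hΓ : Real.Gamma (1 + a) ≠ 0 := (Real.Gamma_pos_of_pos (by linarith)).ne'
    have e1 : a + (-β) + 1 = ((n:ℝ) + 1) * (1 - β) := by rw [ha_def]; ring
    have e2 : -β + 1 = 1 - β := by ring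
    have e3 : a + (-β) + 2 = 1 + ((n:ℝ) + 1) * (1 - β) := by rw [ha_def]; ring
    have e4 : a + 1 = 1 + a := by ring
    have hkey : ∀ X Y Z W : ℝ, X ≠ 0 → (Y ^ n / X) * (W * (X * Y / Z)) = W * (Y ^ (n + 1) / Z) := by
      intro X Y Z W hX
      have h1 : Y ^ n / X * (W * (X * Y / Z)) = W * (Y ^ (n + 1) * (X / X) / Z) := by ring
      rw [h1, div_self hX, mul_one]
    rw [e1, e2, e3, e4, C, C]
    push_cast
    exact hkey _ _ _ _ hΓ

end SimplexIntegralAux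

open SimplexIntegralAux in
/-- Hu's estimate: for `0 < β < 1`, `t > 0` and `n ≥ 1`, the integral over the
ordered simplex `0 < s₁ < … < s_n < t` of `∏_{k=1}^n (s_{k+1} - s_k)^{-β}`
(with `s_{n+1} = t`) equals `t^{n(1-β)} Γ(1-β)^n / Γ(1 + n(1-β))`. -/
theorem simplex_integral_eq (β : ℝ) (hβ0 : 0 < β) (hβ1 : β < 1) (t : ℝ) (ht : 0 < t)
    (n : ℕ) (hn : 0 < n) :
    (∫ s : Fin n → ℝ in {s | StrictMono s ∧ ∀ i, 0 < s i ∧ s i < t},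
        ∏ k : Fin n,
          ((Fin.snoc s t : Fin (n + 1) → ℝ) k.succ -
            (Fin.snoc s t : Fin (n + 1) → ℝ) k.castSucc) ^ (-β)) =
      t ^ ((n : ℝ) * (1 - β)) * Real.Gamma (1 - β) ^ n /
        Real.Gamma (1 + (n : ℝ) * (1 - β)) := by
  have hmain : (∫ s in S n t, P β n t s)
      = t ^ ((n : ℝ) * (1 - β)) * Real.Gamma (1 - β) ^ n /
          Real.Gamma (1 + (n : ℝ) * (1 - β)) := by
    have hnn : 0 ≤ᵐ[volume.restrict (S n t)] P β n t := by
      filter_upwards [ae_restrict_mem (measurableSet_S n t)] with s hs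
      exact (P_pos hs).le
    rw [integral_eq_lintegral_of_nonneg_ae hnn
        (measurable_P β n t).aestronglyMeasurable,
      L_eq hβ0 hβ1 n t ht,
      ENNReal.toReal_ofReal (by
        have h1 : (0:ℝ) ≤ t ^ ((n : ℝ) * (1 - β)) := Real.rpow_nonneg ht.le _
        exact mul_nonneg h1 (C_pos hβ1 n).le)]
    rw [C, mul_div_assoc]
  exact hmain
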